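/- Let H be the height process of a rooted ordered tree on m vertices (heights in depth-first order) and C its contour process. Define K(i) = 2i - H(i) for 0 ≤ i ≤ m-1. Then C(K(i)) = H(i) for all i, i.e., the contour process visits the (i+1)-st vertex in depth-first order at time K(i), at which point it is at the height of that vertex. -/

import Mathlib

/-- A finite rooted ordered (plane) tree. -/
inductive PTree : Type
  | node : List PTree → PTree

namespace PTree

/-- The number of vertices of a plane tree. -/
def size : PTree → ℕ
  | .node ts => 1 + (ts.attach.map (fun ⟨t, _⟩ => size t)).sum

/-- The height process: the list of the heights of the vertices, in
depth-first order, when the root is at height `h`. -/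
def heights : PTree → ℕ → List ℕ
  | .node ts, h => h :: (ts.attach.map (fun ⟨t, _⟩ => heights t (h + 1))).flatten

/-- The contour process: the list of heights visited by the contour
exploration of the tree (one entry per unit of time; each edge is traversed
twice), when the root is at height `h`. -/
def contour : PTree → ℕ → List ℕ
  | .node ts, h =>
      h :: (ts.attach.map (fun ⟨t, _⟩ => contour t (h + 1) ++ [h])).flatten

end PTree

/-!
By induction over a tree and the forest of its subtrees: the `i`-th vertex of a tree rooted at
height `h`, of height `x`, is reached by the contour at a time `k` with `k + x = 2 * i + h`
(stated additively, so that no truncated subtraction occurs). The invariant survives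
concatenating subtrees, since a subtree with `n` vertices contributes `n` entries to the height
process and `2 * n` to the contour (its own `2 * n - 1` plus the return step to its parent), and
it survives hanging a forest below a new root, since index and time both shift by one while the
root height drops by one.
-/

lemma List.getElem?_append_of_getElem?_eq_some {α : Type*} {l₁ : List α} (l₂ : List α) {i : ℕ}
    {x : α} (hx : l₁[i]? = some x) : (l₁ ++ l₂)[i]? = some x := by
  rw [List.getElem?_append_left (List.getElem?_eq_some_iff.1 hx).1, hx]

namespace PTree

/- The subtrees `ts` of a vertex at height `h`, explored in order: their heights, and their contour
including each return step to that vertex. -/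
def forestHeights (ts : List PTree) (h : ℕ) : List ℕ :=
  (ts.map fun t => t.heights (h + 1)).flatten

def forestContour (ts : List PTree) (h : ℕ) : List ℕ :=
  (ts.map fun t => t.contour (h + 1) ++ [h]).flatten

@[simp]
lemma size_node (ts : List PTree) : (node ts).size = 1 + (ts.map size).sum := by
  rw [size, List.attach_map_val]

@[simp]
lemma heights_node (ts : List PTree) (h : ℕ) :
    (node ts).heights h = h :: forestHeights ts h := by
  rw [heights, forestHeights, ← List.attach_map_val (l := ts) (f := fun t => heights t (h + 1))]

@[simp]
lemma contour_node (ts : List PTree) (h : ℕ) :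
    (node ts).contour h = h :: forestContour ts h := by
  rw [contour, forestContour,
    ← List.attach_map_val (l := ts) (f := fun t => t.contour (h + 1) ++ [h])]

@[simp]
lemma forestHeights_nil (h : ℕ) : forestHeights [] h = [] := rfl

@[simp]
lemma forestHeights_cons (t : PTree) (ts : List PTree) (h : ℕ) :
    forestHeights (t :: ts) h = t.heights (h + 1) ++ forestHeights ts h := rfl

@[simp]
lemma forestContour_nil (h : ℕ) : forestContour [] h = [] := rfl

@[simp]
lemma forestContour_cons (t : PTree) (ts : List PTree) (h : ℕ) :
    forestContour (t :: ts) h = t.contour (h + 1) ++ [h] ++ forestContour ts h := rfl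

mutual

theorem length_heights : ∀ (t : PTree) (h : ℕ), (t.heights h).length = t.size
  | .node ts, h => by simp [length_forestHeights ts h, Nat.add_comm]

theorem length_forestHeights : ∀ (ts : List PTree) (h : ℕ),
    (forestHeights ts h).length = (ts.map size).sum
  | [], _ => rfl
  | t :: ts, h => by simp [length_heights t, length_forestHeights ts h]

end

mutual

theorem length_contour_add_one : ∀ (t : PTree) (h : ℕ),
    (t.contour h).length + 1 = 2 * t.size
  | .node ts, h => by
    rw [contour_node, List.length_cons, length_forestContour, size_node]
    ring

theorem length_forestContour : ∀ (ts : List PTree) (h : ℕ),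
    (forestContour ts h).length = 2 * (ts.map size).sum
  | [], _ => rfl
  | t :: ts, h => by
    have := length_contour_add_one t (h + 1)
    simp [length_forestContour ts h]
    omega

end

mutual

theorem exists_contour_getElem?_eq_of_heights_getElem?_eq :
    ∀ (t : PTree) (h i x : ℕ), (t.heights h)[i]? = some x →
      ∃ k, k + x = 2 * i + h ∧ (t.contour h)[k]? = some x
  | .node ts, h, 0, x, hx => ⟨0, by simp_all⟩
  | .node ts, h, i + 1, x, hx => by
    obtain ⟨k, hk, hkx⟩ := exists_forestContour_getElem?_eq_of_forestHeights_getElem?_eq ts h i x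
      (by simpa using hx)
    exact ⟨k + 1, by omega, by simpa using hkx⟩

theorem exists_forestContour_getElem?_eq_of_forestHeights_getElem?_eq :
    ∀ (ts : List PTree) (h j x : ℕ), (forestHeights ts h)[j]? = some x →
      ∃ k, k + x = 2 * j + (h + 1) ∧ (forestContour ts h)[k]? = some x
  | [], _, _, _, hx => by simp at hx
  | t :: ts, h, j, x, hx => by
    rw [forestHeights_cons, List.getElem?_append, length_heights] at hx
    split_ifs at hx with hj
    · obtain ⟨k, hk, hkx⟩ := exists_contour_getElem?_eq_of_heights_getElem?_eq t (h + 1) j x hx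
      refine ⟨k, hk, ?_⟩
      rw [forestContour_cons, List.append_assoc]
      exact List.getElem?_append_of_getElem?_eq_some _ hkx
    · obtain ⟨k, hk, hkx⟩ :=
        exists_forestContour_getElem?_eq_of_forestHeights_getElem?_eq ts h (j - t.size) x hx
      have hlen : (t.contour (h + 1) ++ [h]).length = 2 * t.size := by
        simpa using length_contour_add_one t (h + 1)
      refine ⟨2 * t.size + k, by omega, ?_⟩
      rw [forestContour_cons, List.getElem?_append_right (by omega), hlen, Nat.add_sub_cancel_left,
        hkx]

end

end PTree

/-- Let `H` be the height process of a rooted ordered tree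
on `m` vertices and `C` its contour process, and set `K(i) = 2i - H(i)`.
Then `C(K(i)) = H(i)` for every `0 ≤ i ≤ m - 1`: the contour process visits
the `(i+1)`-st vertex in depth-first order at time `K(i)`, at which moment it
is at the height of that vertex. -/
theorem contour_at_K_eq_height (t : PTree) (i : ℕ) (hi : i < t.size) :
    (t.contour 0).getD (2 * i - (t.heights 0).getD i 0) 0
      = (t.heights 0).getD i 0 := by
  have hx : (t.heights 0)[i]? = some ((t.heights 0).getD i 0) := by
    rw [List.getD_eq_getElem?_getD, List.getElem?_eq_getElem (by rwa [PTree.length_heights])]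
    rfl
  obtain ⟨k, hk, hkx⟩ := PTree.exists_contour_getElem?_eq_of_heights_getElem?_eq t 0 i _ hx
  rw [List.getD_eq_getElem?_getD (l := t.contour 0), show 2 * i - _ = k by omega, hkx,
    Option.getD_some]
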